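/- Let λ ≥ 0 and u, v ∈ ℝ^d with v ≠ u. Then the point x⋆ = v − min(λ, ‖v − u‖₂) · (v − u)/‖v − u‖₂ is the unique global minimizer over x ∈ ℝ^d of λ‖x − u‖₂ + (1/2)‖x − v‖₂². In particular, if ‖v − u‖₂ ≤ λ then x⋆ = u, and if ‖v − u‖₂ > λ then x⋆ = v − λ(v − u)/‖v − u‖₂. -/
import Mathlib

open RealInnerProductSpace
set_option maxHeartbeats 1000000

/-- For `λ ≥ 0` and `v ≠ u`, the point
`x⋆ = v - min(λ, ‖v - u‖)(v - u)/‖v - u‖` is the unique global minimizer of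
`x ↦ λ‖x - u‖ + (1/2)‖x - v‖²`. In particular `x⋆ = u` when `‖v - u‖ ≤ λ`,
and `x⋆ = v - λ(v - u)/‖v - u‖` when `‖v - u‖ > λ`. -/
theorem prox_of_weighted_distance_closed_form
    (d : ℕ) (u v : EuclideanSpace ℝ (Fin d)) (lam : ℝ)
    (hlam : 0 ≤ lam) (hvu : v ≠ u)
    (xstar : EuclideanSpace ℝ (Fin d))
    (hxstar : xstar = v - (min lam ‖v - u‖ / ‖v - u‖) • (v - u)) :
    (∀ x : EuclideanSpace ℝ (Fin d),
      lam * ‖xstar - u‖ + (1 / 2) * ‖xstar - v‖ ^ 2 ≤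
        lam * ‖x - u‖ + (1 / 2) * ‖x - v‖ ^ 2) ∧
    (∀ x : EuclideanSpace ℝ (Fin d),
      lam * ‖x - u‖ + (1 / 2) * ‖x - v‖ ^ 2 =
        lam * ‖xstar - u‖ + (1 / 2) * ‖xstar - v‖ ^ 2 → x = xstar) ∧
    (‖v - u‖ ≤ lam → xstar = u) ∧
    (lam < ‖v - u‖ → xstar = v - (lam / ‖v - u‖) • (v - u)) := by
  set b : EuclideanSpace ℝ (Fin d) := v - u with hb
  have hbne : b ≠ 0 := sub_ne_zero.mpr hvu
  have hr : (0:ℝ) < ‖b‖ := norm_pos_iff.mpr hbne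
  set r : ℝ := ‖b‖ with hrdef
  set m : ℝ := min lam r with hm
  have hm_le_lam : m ≤ lam := min_le_left _ _
  have hm_le_r : m ≤ r := min_le_right _ _
  have hm0 : 0 ≤ m := le_min hlam hr.le
  have hprod : (r - m) * (m - lam) = 0 := by
    rcases le_total lam r with h | h
    · rw [hm, min_eq_left h]; ring
    · rw [hm, min_eq_right h]; ring
  have hxu : xstar - u = (1 - m / r) • b := by
    rw [hxstar, sub_smul, one_smul]
    simp only [hb]
    abel
  have hcoef : 0 ≤ 1 - m / r := by
    have : m / r ≤ 1 := (div_le_one hr).mpr hm_le_r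
    linarith
  have hnxu : ‖xstar - u‖ = r - m := by
    rw [hxu, norm_smul, Real.norm_of_nonneg hcoef, ← hrdef]
    field_simp
  have hxv : xstar - v = (-(m / r)) • b := by
    rw [hxstar, neg_smul]
    abel
  have hnxv : ‖xstar - v‖ = m := by
    rw [hxv, norm_smul, norm_neg, Real.norm_of_nonneg (by positivity), ← hrdef]
    field_simp
  have hexp : ∀ x : EuclideanSpace ℝ (Fin d),
      ‖x - v‖ ^ 2 = ‖x - u‖ ^ 2 - 2 * ⟪x - u, b⟫ + r ^ 2 := by
    intro x
    have h1 : x - v = (x - u) - b := by simp only [hb]; abel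
    rw [h1, norm_sub_sq_real, hrdef]
  have hval : lam * ‖xstar - u‖ + (1 / 2) * ‖xstar - v‖ ^ 2
      = lam * (r - m) + (1 / 2) * m ^ 2 := by rw [hnxu, hnxv]
  have hineq : ∀ x : EuclideanSpace ℝ (Fin d),
      lam * ‖xstar - u‖ + (1 / 2) * ‖xstar - v‖ ^ 2 ≤
        lam * ‖x - u‖ + (1 / 2) * ‖x - v‖ ^ 2 := by
    intro x
    rw [hval, hexp x]
    have hi : ⟪x - u, b⟫ ≤ ‖x - u‖ * r := by
      rw [hrdef]; exact real_inner_le_norm _ _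
    have hs0 : (0:ℝ) ≤ ‖x - u‖ := norm_nonneg _
    nlinarith [sq_nonneg (‖x - u‖ - (r - m)),
      mul_nonneg (sub_nonneg.mpr hm_le_lam) hs0, hprod]
  have hthird : ‖v - u‖ ≤ lam → xstar = u := by
    intro h
    have hmr : m = r := min_eq_right (by rw [hrdef, hb]; exact h)
    have : xstar - u = 0 := by
      rw [hxu, hmr, div_self hr.ne', sub_self, zero_smul]
    exact sub_eq_zero.mp this
  refine ⟨hineq, ?_, hthird, ?_⟩
  · intro x heq
    rw [hval, hexp x] at heq
    set s : ℝ := ‖x - u‖ with hs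
    set i : ℝ := ⟪x - u, b⟫ with hidef
    have hi : i ≤ s * r := by rw [hidef, hs, hrdef]; exact real_inner_le_norm _ _
    have hs0 : (0:ℝ) ≤ s := norm_nonneg _
    have key : (s - (r - m)) ^ 2 / 2 + (lam - m) * s + (s * r - i) = 0 := by
      linear_combination heq - hprod
    have t2 : 0 ≤ (lam - m) * s := mul_nonneg (by linarith) hs0
    have t3 : 0 ≤ s * r - i := by linarith
    have t1 : (s - (r - m)) ^ 2 = 0 := by nlinarith [sq_nonneg (s - (r - m))]
    have h1 : s = r - m := by
      have := pow_eq_zero_iff (n := 2) (by norm_num) |>.mp t1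
      linarith
    have h2 : i = s * r := by linarith
    rcases le_or_gt r lam with hc | hc
    · have hx : x = u := by
        have hs0' : s = 0 := by
          have hmr : m = r := hm.trans (min_eq_right hc)
          rw [h1, hmr]; ring
        exact sub_eq_zero.mp (norm_eq_zero.mp (hs ▸ hs0'))
      rw [hx, hthird (by rw [← hb, ← hrdef]; exact hc)]
    · have hml : m = lam := hm.trans (min_eq_left hc.le)
      have hinner : ⟪x - u, b⟫ = ‖x - u‖ * ‖b‖ := by
        rw [← hidef, ← hs, ← hrdef, h2]
      have hdir : ‖b‖ • (x - u) = ‖x - u‖ • b := inner_eq_norm_mul_iff_real.mp hinner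
      rw [← hrdef, ← hs] at hdir
      have hxu' : x - u = (s / r) • b := by
        have := congrArg (fun z => r⁻¹ • z) hdir
        simpa [smul_smul, inv_mul_cancel₀ hr.ne', div_eq_inv_mul, mul_comm] using this
      have hxsu : xstar - u = (s / r) • b := by
        rw [hxu, h1, hml]
        congr 1
        field_simp
      have : x - u = xstar - u := by rw [hxu', hxsu]
      exact sub_left_inj.mp this
  · intro h
    rw [hxstar, hm.trans (min_eq_left h.le)]
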